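/- arXiv:1704.03784 — 4 statements merged into one kernel-verified Lean document; each statement's English description precedes it below -/
import Mathlib

section
/- Let A and B be commutative rings, let M be an abelian group equipped with an A-module structure and a B-module structure whose scalar actions commute, and let N be a B-module that is finitely generated and projective as a B-module. Equip Hom_A(M, A) with the B-module structure (b·φ)(m) = φ(b·m). Then the canonical A-linear map Hom_A(M, A) ⊗_B Hom_B(N, B) → Hom_A(M ⊗_B N, A), sending φ ⊗ ψ to the functional m ⊗ n ↦ φ(ψ(n)·m), is bijective. -/
/-! The `B`-module structure on `Hom_A(X, A)` given by acting through the domain: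
`(b • φ) x = φ (b • x)`. -/

section DomDual

variable (A B X : Type*) [CommRing A] [CommRing B] [AddCommGroup X]
  [Module A X] [Module B X] [SMulCommClass A B X]

noncomputable instance (priority := 50) Module.domDual : Module B (X →ₗ[A] A) where
  smul b φ :=
    { toFun := fun x => φ (b • x)
      map_add' := fun x y => by show φ (b • (x + y)) = φ (b • x) + φ (b • y); rw [smul_add, map_add]
      map_smul' := fun a x => by
        simp only [RingHom.id_apply]
        show φ (b • a • x) = a • φ (b • x)
        rw [← smul_comm, map_smul] }
  one_smul φ := LinearMap.ext fun x => by
    show φ ((1 : B) • x) = φ x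
    rw [one_smul]
  mul_smul b c φ := LinearMap.ext fun x => by
    show φ ((b * c) • x) = φ (c • b • x)
    rw [mul_comm, mul_smul]
  smul_zero b := LinearMap.ext fun _ => rfl
  smul_add b φ ψ := LinearMap.ext fun _ => rfl
  add_smul b c φ := LinearMap.ext fun x => by
    show φ ((b + c) • x) = φ (b • x) + φ (c • x)
    rw [add_smul, map_add]
  zero_smul φ := LinearMap.ext fun x => by
    show φ ((0 : B) • x) = 0
    rw [zero_smul, map_zero]

@[simp] theorem Module.domDual_smul_apply (b : B) (φ : X →ₗ[A] A) (x : X) :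
    (b • φ) x = φ (b • x) := rfl

/-- The domain `B`-action on `Hom_A(X, A)` commutes with the canonical `A`-action. -/
instance : SMulCommClass A B (X →ₗ[A] A) :=
  ⟨fun _ _ _ => LinearMap.ext fun _ => rfl⟩

instance : SMulCommClass B A (X →ₗ[A] A) :=
  ⟨fun _ _ _ => LinearMap.ext fun _ => rfl⟩

end DomDual

/-! The map factors as `Hom_A(M, A) ⊗[B] N^* → Hom_B(N, Hom_A(M, A))`,
`φ ⊗ ψ ↦ (n ↦ ψ n • φ)`, followed by the tensor-hom adjunction
`Hom_B(N, Hom_A(M, A)) ≃ Hom_A(M ⊗[B] N, A)`. The first map is `dualTensorHom` up to swapping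
the tensor factors, hence bijective since `N` is finitely generated projective. -/

open TensorProduct

section TensorDualHom

variable {A B N P : Type*} [CommRing A] [CommRing B] [AddCommGroup N] [Module B N]
  [AddCommGroup P] [Module A P] [Module B P] [SMulCommClass B A P]

variable (A B N P) in
noncomputable def tensorDualHom : P ⊗[B] Module.Dual B N →ₗ[A] N →ₗ[B] P where
  toFun := dualTensorHom B N P ∘ₗ (TensorProduct.comm B P (Module.Dual B N)).toLinearMap
  map_add' := map_add _
  map_smul' a t := by
    induction t using TensorProduct.induction_on with
    | zero => simp
    | tmul p ψ => ext n; simp [smul_tmul', smul_comm]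
    | add x y hx hy => rw [smul_add, map_add, map_add, hx, hy, smul_add]

theorem tensorDualHom_bijective [Module.Finite B N] [Module.Projective B N] :
    Function.Bijective (tensorDualHom A B N P) :=
  dualTensorHom_bijective.comp (TensorProduct.comm B P (Module.Dual B N)).bijective

end TensorDualHom

section Adjunction

variable {A B M N Q : Type*} [CommRing A] [CommRing B]
  [AddCommGroup M] [Module A M] [Module B M] [SMulCommClass B A M]
  [AddCommGroup N] [Module B N] [AddCommGroup Q] [Module A Q]

theorem TensorProduct.ext_of_leftModule {Φ Ψ : M ⊗[B] N →ₗ[A] Q}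
    (h : ∀ m n, Φ (m ⊗ₜ n) = Ψ (m ⊗ₜ n)) : Φ = Ψ :=
  LinearMap.ext fun t => t.induction_on (by simp) h fun x y hx hy => by simp [hx, hy]

variable (A M) in
noncomputable def tmulRight (n : N) : M →ₗ[A] M ⊗[B] N where
  toFun m := m ⊗ₜ n
  map_add' m m' := add_tmul m m' n
  map_smul' a m := (smul_tmul' a m n).symm

variable [SMulCommClass A B M]

noncomputable def curryDomDual (Φ : M ⊗[B] N →ₗ[A] A) : N →ₗ[B] M →ₗ[A] A where
  toFun n := Φ ∘ₗ tmulRight A M n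
  map_add' n n' := by ext m; simp [tmulRight, tmul_add]
  map_smul' b n := by ext m; simp [tmulRight, smul_tmul]

noncomputable def uncurryDomDual (g : N →ₗ[B] M →ₗ[A] A) : M ⊗[B] N →ₗ[A] A where
  toFun := liftAddHom (LinearMap.toAddMonoidHom'.comp g.toAddMonoidHom).flip fun b m n => by
    show g n (b • m) = g (b • n) m
    rw [g.map_smul]; rfl
  map_add' := map_add _
  map_smul' a t := by
    induction t using TensorProduct.induction_on with
    | zero => simp
    | tmul m n =>
      rw [smul_tmul']
      exact map_smul (g n) a m
    | add x y hx hy => rw [smul_add, map_add, map_add, hx, hy, smul_add]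

variable (A M N) in
noncomputable def uncurryDomDualEquiv : (N →ₗ[B] M →ₗ[A] A) ≃ₗ[A] (M ⊗[B] N →ₗ[A] A) where
  toFun := uncurryDomDual
  invFun := curryDomDual
  map_add' _ _ := TensorProduct.ext_of_leftModule fun _ _ => rfl
  map_smul' _ _ := TensorProduct.ext_of_leftModule fun _ _ => rfl
  left_inv _ := rfl
  right_inv _ := TensorProduct.ext_of_leftModule fun _ _ => rfl

end Adjunction

/-- The duality isomorphism `ν : D_X(M ∘ N) ≅ D_X(M) ∘ D_Y(N)` of Witt-correspondence
composition: for `M` with commuting `A`- and `B`-actions and `N` a finitely generated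
projective `B`-module, the canonical `A`-linear map
`Hom_A(M, A) ⊗[B] Hom_B(N, B) → Hom_A(M ⊗[B] N, A)`, `φ ⊗ ψ ↦ (m ⊗ n ↦ φ (ψ n • m))`,
is bijective.  (Here `Hom_A(M, A)` carries the `B`-action through the domain and
`M ⊗[B] N` the `A`-action through the factor `M`.) -/
theorem stmt_4 (A B M N : Type*) [CommRing A] [CommRing B]
    [AddCommGroup M] [Module A M] [Module B M]
    [SMulCommClass A B M] [SMulCommClass B A M]
    [AddCommGroup N] [Module B N]
    [Module.Finite B N] [Module.Projective B N] :
    ∃ F : ((M →ₗ[A] A) ⊗[B] (N →ₗ[B] B)) →ₗ[A] ((M ⊗[B] N) →ₗ[A] A),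
      (∀ (φ : M →ₗ[A] A) (ψ : N →ₗ[B] B) (m : M) (n : N),
        F (φ ⊗ₜ[B] ψ) (m ⊗ₜ[B] n) = φ (ψ n • m)) ∧
      Function.Bijective ⇑F :=
  ⟨(uncurryDomDualEquiv A M N).toLinearMap ∘ₗ tensorDualHom A B N _, fun _ _ _ _ => rfl,
    (uncurryDomDualEquiv A M N).bijective.comp tensorDualHom_bijective⟩
end

section
/- Let R be a commutative ring, A a commutative R-algebra, e ∈ A an element that is not a zero divisor, and n ≥ 1. Let S = A/(eⁿ), and for 0 ≤ j ≤ n let I_j denote the image in S of the ideal (e^j) ⊆ A. Suppose q : S → Hom_R(S, R) is an S-linear bijection (where Hom_R(S, R) is an S-module via (s·φ)(t) = φ(s·t)) such that the pairing ⟨a, b⟩ = q(a)(b) is symmetric. Then for every 0 ≤ i ≤ n, the orthogonal complement of I_i, namely {a ∈ S : ⟨a, b⟩ = 0 for all b ∈ I_i}, equals I_{n-i}. -/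
set_option maxHeartbeats 1000000


/-- Let `S = A⧸(eⁿ)` with `e` a non-zero-divisor, and let `q` be a symmetric `S`-linear
duality `S ≃ Hom_R(S, R)` (encoded as the bilinear pairing `⟨a,b⟩ = q a b`).  Then for
`0 ≤ i ≤ n` the orthogonal complement of the image of the ideal `(eⁱ)` is the image of
the ideal `(e^(n-i))`. -/
theorem stmt_7 (R A : Type*) [CommRing R] [CommRing A] [Algebra R A]
    (e : A) (he : e ∈ nonZeroDivisors A) (n : ℕ) (hn : 1 ≤ n)
    (q : (A ⧸ Ideal.span {e ^ n}) →ₗ[R] (A ⧸ Ideal.span {e ^ n}) →ₗ[R] R)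
    (hlin : ∀ s a b, q (s * a) b = q a (s * b))
    (hsymm : ∀ a b, q a b = q b a)
    (hbij : Function.Bijective ⇑q)
    (i : ℕ) (hi : i ≤ n) :
    {a : A ⧸ Ideal.span {e ^ n} |
        ∀ b ∈ Ideal.map (Ideal.Quotient.mk (Ideal.span {e ^ n})) (Ideal.span {e ^ i}),
          q a b = 0}
      = ↑(Ideal.map (Ideal.Quotient.mk (Ideal.span {e ^ n})) (Ideal.span {e ^ (n - i)})) := by
  set π := Ideal.Quotient.mk (Ideal.span {e ^ n}) with hπ
  have hmap : ∀ j : ℕ, Ideal.map π (Ideal.span {e ^ j}) = Ideal.span {π (e ^ j)} := by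
    intro j
    rw [Ideal.map_span, Set.image_singleton]
  have hen : π (e ^ n) = 0 := by
    rw [Ideal.Quotient.eq_zero_iff_mem]
    exact Ideal.mem_span_singleton_self _
  ext a
  simp only [hmap, Set.mem_setOf_eq, SetLike.mem_coe, Ideal.mem_span_singleton]
  constructor
  · intro h
    -- first: q (π (e^i) * a) = 0
    have hq : q (π (e ^ i) * a) = 0 := by
      refine LinearMap.ext fun d => ?_
      have hb : π (e ^ i) ∣ π (e ^ i) * d := Dvd.intro _ rfl
      calc q (π (e ^ i) * a) d = q a (π (e ^ i) * d) := hlin _ _ _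
        _ = 0 := h _ hb
    have h0 : π (e ^ i) * a = 0 := hbij.injective (by rw [hq, map_zero])
    obtain ⟨x, rfl⟩ := Ideal.Quotient.mk_surjective a
    have hx : e ^ i * x ∈ Ideal.span {e ^ n} := by
      rw [← Ideal.Quotient.eq_zero_iff_mem, map_mul]
      exact h0
    rw [Ideal.mem_span_singleton] at hx
    obtain ⟨y, hy⟩ := hx
    have hsplit : e ^ n = e ^ i * e ^ (n - i) := by
      rw [← pow_add, Nat.add_sub_cancel' hi]
    have hpow : e ^ i ∈ nonZeroDivisors A := pow_mem he i
    have hx2 : x = e ^ (n - i) * y := by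
      have h' : x * e ^ i = e ^ (n - i) * y * e ^ i := by
        rw [mul_comm x, mul_comm _ (e ^ i), hy, hsplit, mul_assoc]
      exact mul_cancel_right_mem_nonZeroDivisors hpow |>.mp h'
    exact ⟨π y, by rw [hx2, map_mul, mul_comm]⟩
  · rintro ⟨c, rfl⟩ b ⟨d, rfl⟩
    calc q (π (e ^ (n - i)) * c) (π (e ^ i) * d)
        = q c (π (e ^ (n - i)) * (π (e ^ i) * d)) := hlin _ _ _
      _ = q c (π (e ^ n) * d) := by
          rw [← mul_assoc, ← map_mul, ← pow_add, Nat.sub_add_cancel hi]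
      _ = 0 := by rw [hen, zero_mul, map_zero]
end

section
/- Let R be a commutative ring, A a commutative R-algebra, e ∈ A an element that is not a zero divisor, and n = 2l an even positive integer. Let S = A/(eⁿ), and suppose q : S → Hom_R(S, R) is an S-linear bijection (where Hom_R(S, R) is an S-module via (s·φ)(t) = φ(s·t)) such that the pairing ⟨a, b⟩ = q(a)(b) is symmetric. Then the submodule L given by the image in S of the ideal (e^l) ⊆ A satisfies L = L^⊥, i.e. L is a Lagrangian of the quadratic space (S, q), so (S, q) is metabolic. -/
set_option maxHeartbeats 1000000


/-- Even case of Lemma `lm_SqMet`: for `S = A⧸(e^(2l))` with `e` a non-zero-divisor and a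
symmetric `S`-linear duality `q : S ≃ Hom_R(S,R)`, the image `L` of the ideal `(e^l)`
is a Lagrangian: `L^⊥ = L`, so the quadratic space `(S, q)` is metabolic. -/
theorem stmt_8 (R A : Type*) [CommRing R] [CommRing A] [Algebra R A]
    (e : A) (he : e ∈ nonZeroDivisors A) (l : ℕ) (hl : 1 ≤ l)
    (q : (A ⧸ Ideal.span {e ^ (2 * l)}) →ₗ[R] (A ⧸ Ideal.span {e ^ (2 * l)}) →ₗ[R] R)
    (hlin : ∀ s a b, q (s * a) b = q a (s * b))
    (hsymm : ∀ a b, q a b = q b a)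
    (hbij : Function.Bijective ⇑q) :
    {a : A ⧸ Ideal.span {e ^ (2 * l)} |
        ∀ b ∈ Ideal.map (Ideal.Quotient.mk (Ideal.span {e ^ (2 * l)})) (Ideal.span {e ^ l}),
          q a b = 0}
      = ↑(Ideal.map (Ideal.Quotient.mk (Ideal.span {e ^ (2 * l)})) (Ideal.span {e ^ l})) := by
  have hmap : Ideal.map (Ideal.Quotient.mk (Ideal.span {e ^ (2 * l)})) (Ideal.span {e ^ l})
      = Ideal.span {Ideal.Quotient.mk (Ideal.span {e ^ (2 * l)}) (e ^ l)} := by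
    rw [Ideal.map_span, Set.image_singleton]
  have h2l : Ideal.Quotient.mk (Ideal.span {e ^ (2 * l)}) (e ^ (2 * l)) = 0 := by
    rw [Ideal.Quotient.eq_zero_iff_mem]
    exact Ideal.mem_span_singleton_self _
  have hel : e ^ l ∈ nonZeroDivisors A := pow_mem he l
  ext a
  simp only [Set.mem_setOf_eq, SetLike.mem_coe, hmap]
  constructor
  · intro h
    obtain ⟨a', rfl⟩ := Ideal.Quotient.mk_surjective a
    rw [Ideal.mem_span_singleton]
    have h0 : Ideal.Quotient.mk (Ideal.span {e ^ (2 * l)}) (e ^ l)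
        * Ideal.Quotient.mk (Ideal.span {e ^ (2 * l)}) a' = 0 := by
      apply hbij.1
      rw [map_zero]
      refine LinearMap.ext fun b => ?_
      obtain ⟨b', rfl⟩ := Ideal.Quotient.mk_surjective b
      simp only [LinearMap.zero_apply]
      rw [hlin]
      apply h
      rw [Ideal.mem_span_singleton]
      exact ⟨Ideal.Quotient.mk (Ideal.span {e ^ (2 * l)}) b', rfl⟩
    rw [← map_mul, Ideal.Quotient.eq_zero_iff_mem, Ideal.mem_span_singleton] at h0
    obtain ⟨c, hc⟩ := h0
    rw [two_mul, pow_add, mul_assoc] at hc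
    have hac : a' = e ^ l * c := (mul_cancel_left_mem_nonZeroDivisors hel).mp hc
    exact ⟨Ideal.Quotient.mk (Ideal.span {e ^ (2 * l)}) c, by rw [hac, map_mul]⟩
  · intro h b hb
    rw [Ideal.mem_span_singleton] at h hb
    obtain ⟨c, rfl⟩ := h
    obtain ⟨d, rfl⟩ := hb
    rw [hlin, ← mul_assoc, ← map_mul, ← pow_add, ← two_mul, h2l, zero_mul,
      map_zero]
end

section
/- Let R be a commutative ring, A a commutative R-algebra, e ∈ A an element that is not a zero divisor, and n = 2l+1 an odd positive integer. Let S = A/(eⁿ), let L be the image in S of the ideal (e^l) ⊆ A and L' the image of (e^{l+1}). Suppose q : S → Hom_R(S, R) is an S-linear bijection (where Hom_R(S, R) is an S-module via (s·φ)(t) = φ(s·t)) such that the pairing ⟨a, b⟩ = q(a)(b) is symmetric. Then: (i) L' ⊆ L and the orthogonal complement of L' equals L; (ii) the pairing on the quotient L/L' given by ⟨x̄, ȳ⟩ = q(x)(y) is well defined, symmetric, and the induced map L/L' → Hom_R(L/L', R) is bijective; (iii) L/L' is isomorphic as an A-module to A/(e), via the map A/(e) → L/L' induced by a ↦ e^l·a.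 -/
/-!
Since `q` is `S`-linear and injective, orthogonality to an ideal is annihilation of it:
`q a b = 0` for all `b ∈ I` forces `q (a * b) = 0`, hence `a * b = 0`. In `S = A/(eⁿ)` with `e`
regular, the annihilator of `(eʲ)` is `(eᵏ)` whenever `j + k = n`; for `n = 2l + 1` this gives
`L'^⊥ = L` and `L^⊥ = L'`, so `q` descends to a nondegenerate form on `L/L'`. It is also perfect:
a functional `φ` on `L/L'` pulls back along `s ↦ s eˡ` to a functional `q t` on `S` that kills
`(e)`, so `t = e²ˡ c` and `φ` is the pairing with `eˡ c`. Finally `a ↦ eˡ a` maps `A` onto `L/L'`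
with kernel `(e)`, again because `e` is regular.
-/

section Pairing

variable {R S : Type*} [CommRing R] [CommRing S] [Module R S] {q : S →ₗ[R] S →ₗ[R] R}

theorem orthogonal_eq_annihilator (hlin : ∀ s a b, q (s * a) b = q a (s * b))
    (hq : Function.Injective q) (I : Ideal S) :
    {a : S | ∀ b ∈ I, q a b = 0} = I.annihilator := by
  ext a
  simp only [Set.mem_ofPred_eq, SetLike.mem_coe, Submodule.mem_annihilator, smul_eq_mul]
  refine ⟨fun ha b hb => hq ?_, fun ha b hb => ?_⟩
  · ext s
    rw [mul_comm, hlin, map_zero, LinearMap.zero_apply]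
    exact ha _ (I.mul_mem_right s hb)
  · rw [← mul_one b, ← hlin, mul_comm, ha b hb, map_zero, LinearMap.zero_apply]

variable [IsScalarTower R S S]

variable (q) in
def quotientPairing (hsymm : ∀ a b, q a b = q b a) (L L' : Ideal S)
    (hLL' : ∀ x ∈ L, ∀ y ∈ L', q x y = 0) :
    (L ⧸ Submodule.comap L.subtype L') →ₗ[R] (L ⧸ Submodule.comap L.subtype L') →ₗ[R] R :=
  let ι := L.subtype.restrictScalars R
  (q.compl₁₂ ι ι).liftQ₂ ((Submodule.comap L.subtype L').restrictScalars R)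
    ((Submodule.comap L.subtype L').restrictScalars R)
    (fun _ hy => LinearMap.ext fun x => (hsymm _ _).trans (hLL' _ x.2 _ hy))
    (fun _ hy => LinearMap.ext fun x => hLL' _ x.2 _ hy)

variable {hsymm : ∀ a b, q a b = q b a} {L L' : Ideal S} {hLL' : ∀ x ∈ L, ∀ y ∈ L', q x y = 0}

@[simp]
theorem quotientPairing_mk (x y : L) :
    quotientPairing q hsymm L L' hLL' (Submodule.Quotient.mk x) (Submodule.Quotient.mk y) =
      q x y :=
  rfl

theorem quotientPairing_comm (u v : L ⧸ Submodule.comap L.subtype L') :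
    quotientPairing q hsymm L L' hLL' u v = quotientPairing q hsymm L L' hLL' v u := by
  induction u using Submodule.Quotient.induction_on
  induction v using Submodule.Quotient.induction_on
  simp only [quotientPairing_mk, hsymm]

theorem quotientPairing_injective (horth : {a : S | ∀ b ∈ L, q a b = 0} ⊆ L') :
    Function.Injective (quotientPairing q hsymm L L' hLL') := by
  refine (injective_iff_map_eq_zero _).mpr fun u hu => ?_
  induction u using Submodule.Quotient.induction_on with | _ x
  refine (Submodule.Quotient.mk_eq_zero _).mpr (horth fun b hb => ?_)
  simpa using LinearMap.congr_fun hu (Submodule.Quotient.mk ⟨b, hb⟩)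

end Pairing

section TruncatedPowers

variable {A : Type*} [CommRing A] {e : A} {n j k : ℕ}

def powImage (e : A) (n j : ℕ) : Ideal (A ⧸ Ideal.span {e ^ n}) :=
  (Ideal.span {e ^ j}).map (Ideal.Quotient.mk _)

theorem powImage_antitone (hjk : j ≤ k) : powImage e n k ≤ powImage e n j :=
  Ideal.map_mono (Ideal.span_singleton_le_span_singleton.mpr (pow_dvd_pow e hjk))

theorem mk_pow_mem_powImage : Ideal.Quotient.mk _ (e ^ j) ∈ powImage e n j :=
  Ideal.mem_map_of_mem _ (Ideal.mem_span_singleton_self _)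

theorem mk_pow_mul_mem_powImage (x : A) :
    Ideal.Quotient.mk _ (e ^ j * x) ∈ powImage e n j :=
  Ideal.mem_map_of_mem _ (Ideal.mul_mem_right x _ (Ideal.mem_span_singleton_self _))

theorem mem_powImage_iff (s : A ⧸ Ideal.span {e ^ n}) :
    s ∈ powImage e n j ↔ ∃ x, Ideal.Quotient.mk _ (e ^ j * x) = s := by
  refine ⟨fun hs => ?_, fun ⟨x, hx⟩ => hx ▸ mk_pow_mul_mem_powImage x⟩
  obtain ⟨y, hy, rfl⟩ := (Ideal.mem_map_iff_of_surjective _ Ideal.Quotient.mk_surjective).mp hs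
  obtain ⟨x, rfl⟩ := Ideal.mem_span_singleton.mp hy
  exact ⟨x, rfl⟩

theorem mk_mem_powImage_iff (hjn : j ≤ n) (x : A) :
    Ideal.Quotient.mk _ x ∈ powImage e n j ↔ e ^ j ∣ x := by
  rw [powImage, Ideal.mem_quotient_iff_mem
    (Ideal.span_singleton_le_span_singleton.mpr (pow_dvd_pow e hjn)), Ideal.mem_span_singleton]

theorem mk_pow_mul_eq_zero_iff (he : e ∈ nonZeroDivisors A) (hjkn : j + k = n) (x : A) :
    Ideal.Quotient.mk (Ideal.span {e ^ n}) (e ^ j * x) = 0 ↔ e ^ k ∣ x := by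
  subst hjkn
  rw [Ideal.Quotient.eq_zero_iff_mem, Ideal.mem_span_singleton, pow_add,
    dvd_cancel_left_mem_nonZeroDivisors (pow_mem he j)]

theorem annihilator_powImage (he : e ∈ nonZeroDivisors A) (hjkn : j + k = n) :
    (powImage e n j).annihilator = powImage e n k := by
  ext s
  obtain ⟨x, rfl⟩ := Ideal.Quotient.mk_surjective s
  rw [powImage, Ideal.map_span, Set.image_singleton, Submodule.mem_annihilator_span_singleton,
    smul_eq_mul, ← map_mul, mul_comm, mk_pow_mul_eq_zero_iff he hjkn,
    mk_mem_powImage_iff (by omega)]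

variable (e n j) in
def mulPow : (A ⧸ Ideal.span {e ^ n}) →ₗ[A ⧸ Ideal.span {e ^ n}]
    powImage e n j ⧸ Submodule.comap (powImage e n j).subtype (powImage e n (j + 1)) :=
  Submodule.mkQ _ ∘ₗ LinearMap.toSpanSingleton _ _ ⟨_, mk_pow_mem_powImage⟩

theorem mulPow_mk (x : A) :
    mulPow e n j (Ideal.Quotient.mk _ x) = Submodule.Quotient.mk ⟨_, mk_pow_mul_mem_powImage x⟩ :=
  congrArg _ (Subtype.ext (by simp [mul_comm]))

theorem mulPow_mk_eq_zero_iff (he : e ∈ nonZeroDivisors A) (hjn : j + 1 ≤ n) (x : A) :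
    mulPow e n j (Ideal.Quotient.mk _ x) = 0 ↔ e ∣ x := by
  rw [mulPow_mk, Submodule.Quotient.mk_eq_zero, Submodule.mem_comap, Submodule.subtype_apply,
    mk_mem_powImage_iff hjn, pow_succ, dvd_cancel_left_mem_nonZeroDivisors (pow_mem he j)]

theorem mulPow_surjective : Function.Surjective (mulPow e n j) := by
  intro u
  induction u using Submodule.Quotient.induction_on with | _ y
  obtain ⟨x, hx⟩ := (mem_powImage_iff y.1).mp y.2
  exact ⟨Ideal.Quotient.mk _ x, (mulPow_mk x).trans (congrArg _ (Subtype.ext hx))⟩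

end TruncatedPowers

section TruncatedPairing

variable {R A : Type*} [CommRing R] [CommRing A] [Algebra R A] {e : A} {n j k : ℕ}
  {q : (A ⧸ Ideal.span {e ^ n}) →ₗ[R] (A ⧸ Ideal.span {e ^ n}) →ₗ[R] R}

theorem orthogonal_powImage (he : e ∈ nonZeroDivisors A)
    (hlin : ∀ s a b, q (s * a) b = q a (s * b)) (hq : Function.Injective q) (hjkn : j + k = n) :
    {a | ∀ b ∈ powImage e n j, q a b = 0} = powImage e n k := by
  rw [orthogonal_eq_annihilator hlin hq, annihilator_powImage he hjkn]

theorem quotientPairing_powImage_surjective {l : ℕ} (hn : n = 2 * l + 1)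
    (he : e ∈ nonZeroDivisors A) (hlin : ∀ s a b, q (s * a) b = q a (s * b))
    (hq : Function.Bijective q) {hsymm : ∀ a b, q a b = q b a}
    {hLL' : ∀ x ∈ powImage e n l, ∀ y ∈ powImage e n (l + 1), q x y = 0} :
    Function.Surjective (quotientPairing q hsymm (powImage e n l) (powImage e n (l + 1)) hLL') := by
  intro φ
  have hpair (i j : ℕ) (x y : A) :
      q (Ideal.Quotient.mk _ (e ^ i * x)) (Ideal.Quotient.mk _ (e ^ j * y)) =
        q (Ideal.Quotient.mk _ (e ^ (j + i) * x)) (Ideal.Quotient.mk _ y) := by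
    rw [map_mul _ _ y, ← hlin, ← map_mul, pow_add, mul_assoc]
  obtain ⟨t, ht⟩ := hq.2 (φ ∘ₗ (mulPow e n l).restrictScalars R)
  have ht_mem : t ∈ powImage e n (2 * l) := by
    rw [← SetLike.mem_coe, ← orthogonal_powImage he hlin hq.1 (j := 1) (by omega)]
    intro b hb
    obtain ⟨x, rfl⟩ := (mem_powImage_iff b).mp hb
    rw [ht, LinearMap.comp_apply, LinearMap.restrictScalars_apply, pow_one,
      (mulPow_mk_eq_zero_iff he (by omega) _).mpr (dvd_mul_right e x), map_zero]
  obtain ⟨c, rfl⟩ := (mem_powImage_iff t).mp ht_mem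
  refine ⟨Submodule.Quotient.mk ⟨_, mk_pow_mul_mem_powImage c⟩, LinearMap.ext fun u => ?_⟩
  induction u using Submodule.Quotient.induction_on with | _ y
  obtain ⟨d, hd⟩ := (mem_powImage_iff y.1).mp y.2
  have hy : y = ⟨_, mk_pow_mul_mem_powImage d⟩ := Subtype.ext hd.symm
  rw [quotientPairing_mk, ← hd, hpair, ← two_mul, ht, LinearMap.comp_apply,
    LinearMap.restrictScalars_apply, mulPow_mk, hy]

end TruncatedPairing

/-- Odd case of Lemma `lm_SqMet`: for `S = A⧸(e^(2l+1))` with `e` a non-zero-divisor and a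
symmetric `S`-linear duality `q : S ≃ Hom_R(S,R)` (encoded by its pairing), with `L`, `L'`
the images in `S` of the ideals `(e^l)`, `(e^(l+1))`:
(i) `L' ⊆ L` and `L'^⊥ = L`;
(ii) `q` descends to a well-defined symmetric duality on `L ⧸ L'`;
(iii) `L ⧸ L' ≅ A⧸(e)` as `A`-modules via `a ↦ e^l·a`. -/
theorem stmt_9 (R A : Type*) [CommRing R] [CommRing A] [Algebra R A]
    (e : A) (he : e ∈ nonZeroDivisors A) (l : ℕ)
    (q : (A ⧸ Ideal.span {e ^ (2 * l + 1)}) →ₗ[R] (A ⧸ Ideal.span {e ^ (2 * l + 1)}) →ₗ[R] R)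
    (hlin : ∀ s a b, q (s * a) b = q a (s * b))
    (hsymm : ∀ a b, q a b = q b a)
    (hbij : Function.Bijective ⇑q) :
    let S := A ⧸ Ideal.span {e ^ (2 * l + 1)}
    let mk := Ideal.Quotient.mk (Ideal.span {e ^ (2 * l + 1)})
    let L : Ideal S := Ideal.map mk (Ideal.span {e ^ l})
    let L' : Ideal S := Ideal.map mk (Ideal.span {e ^ (l + 1)})
    -- (i)
    (L' ≤ L ∧ {a : S | ∀ b ∈ L', q a b = 0} = ↑L) ∧
    -- (ii)
    (∃ qbar : (↥L ⧸ Submodule.comap L.subtype L') →ₗ[R]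
        (↥L ⧸ Submodule.comap L.subtype L') →ₗ[R] R,
      (∀ x y : ↥L, qbar (Submodule.Quotient.mk x) (Submodule.Quotient.mk y) = q ↑x ↑y) ∧
      (∀ u v, qbar u v = qbar v u) ∧
      Function.Bijective ⇑qbar) ∧
    -- (iii)
    (∃ g : (A ⧸ Ideal.span {e}) →ₗ[A] (↥L ⧸ Submodule.comap L.subtype L'),
      (∀ a : A, g (Ideal.Quotient.mk (Ideal.span {e}) a) =
        Submodule.Quotient.mk
          ⟨mk (e ^ l * a),
            Ideal.mem_map_of_mem mk (Ideal.mem_span_singleton'.mpr ⟨a, mul_comm a (e ^ l)⟩)⟩) ∧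
      Function.Bijective ⇑g) := by
  intro S mk L L'
  have hL'_orth : {a : S | ∀ b ∈ L', q a b = 0} = L :=
    orthogonal_powImage he hlin hbij.injective (by omega)
  have hLL' : ∀ x ∈ L, ∀ y ∈ L', q x y = 0 := fun x hx => hL'_orth.ge hx
  let f : A →ₗ[A] L ⧸ Submodule.comap L.subtype L' :=
    (mulPow e _ l).restrictScalars A ∘ₗ (Ideal.Quotient.mkₐ A _).toLinearMap
  have hf_ker : LinearMap.ker f = Ideal.span {e} := by
    ext a
    exact (mulPow_mk_eq_zero_iff he (by omega) a).trans Ideal.mem_span_singleton.symm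
  have hf_surj : Function.Surjective f := mulPow_surjective.comp Ideal.Quotient.mk_surjective
  refine ⟨⟨powImage_antitone l.le_succ, hL'_orth⟩, ?_, ?_⟩
  · refine ⟨quotientPairing q hsymm L L' hLL', fun _ _ => rfl, quotientPairing_comm, ?_, ?_⟩
    · exact quotientPairing_injective (orthogonal_powImage he hlin hbij.injective (by omega)).subset
    · exact quotientPairing_powImage_surjective rfl he hlin hbij
  · refine ⟨(Ideal.span {e}).liftQ f hf_ker.ge,
      fun a => (Submodule.liftQ_apply _ f a).trans (mulPow_mk a), ?_, ?_⟩
    · exact LinearMap.ker_eq_bot.mp (Submodule.ker_liftQ_eq_bot' _ _ hf_ker.symm)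
    · exact LinearMap.range_eq_top.mp
        ((Submodule.range_liftQ _ _ _).trans (LinearMap.range_eq_top.mpr hf_surj))
end
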